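/- Let X be uniformly distributed on [0,1], and for t ∈ (0,1) consider the kernel Ψ(x₁,x₂;t) = 1{x₁ < t} + 1{x₂ < t} − 1{x₁ < t}·1{x₂ < t} − ½(1{x₁ < 2t−t²} + 1{x₂ < 2t−t²}) on [0,1]². Then the projection ψ(z;t) = E[Ψ(z,X;t)] equals (1−t)·1{z < t} + t²/2 − ½·1{z < 2t−t²}, the variance function equals ∫₀¹ ψ(z;t)² dz = ¼ t(1−t)²(2−t), which is strictly positive for 0 < t < 1, and its maximum over t ∈ [0,1] equals 1/16 and is attained at t = 1 − 1/√2. -/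

import Mathlib

open MeasureTheory Set Real

lemma ind_eq (a : ℝ) : (fun x => if x < a then (1:ℝ) else 0) = (Iio a).indicator (fun _ => (1:ℝ)) := by
  ext x; simp [Set.indicator, Set.mem_Iio]

lemma ind_intble (a : ℝ) : IntervalIntegrable (fun x => if x < a then (1:ℝ) else 0) volume 0 1 := by
  rw [ind_eq, intervalIntegrable_iff_integrableOn_Ioc_of_le (by norm_num)]
  exact (integrableOn_const measure_Ioc_lt_top.ne).indicator measurableSet_Iio

lemma ind_integral (a : ℝ) (h0 : 0 ≤ a) (h1 : a ≤ 1) :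
    ∫ x in (0:ℝ)..1, (if x < a then (1:ℝ) else 0) = a := by
  rw [ind_eq, intervalIntegral.integral_of_le (by norm_num), integral_indicator measurableSet_Iio,
    Measure.restrict_restrict measurableSet_Iio]
  have h : Iio a ∩ Ioc 0 1 = Ioo 0 a := by
    ext x
    constructor
    · rintro ⟨hx, hx0, hx1⟩; exact ⟨hx0, hx⟩
    · rintro ⟨hx0, hxa⟩; exact ⟨hxa, hx0, (le_of_lt hxa).trans h1⟩
  rw [h]
  simp [Real.volume_Ioo, ENNReal.toReal_ofReal h0, h0]

lemma combo_integral (a b : ℝ) (h0a : 0 ≤ a) (h1a : a ≤ 1) (h0b : 0 ≤ b) (h1b : b ≤ 1)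
    (c₀ c₁ c₂ : ℝ) :
    ∫ x in (0:ℝ)..1, (c₀ + c₁ * (if x < a then (1:ℝ) else 0) + c₂ * (if x < b then (1:ℝ) else 0))
      = c₀ + c₁ * a + c₂ * b := by
  rw [intervalIntegral.integral_add (((intervalIntegrable_const).add
        ((ind_intble a).const_mul c₁))) ((ind_intble b).const_mul c₂),
    intervalIntegral.integral_add (intervalIntegrable_const) ((ind_intble a).const_mul c₁),
    intervalIntegral.integral_const_mul, intervalIntegral.integral_const_mul,
    intervalIntegral.integral_const, ind_integral a h0a h1a, ind_integral b h0b h1b]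
  simp only [smul_eq_mul]; ring


/-- The kernel family of the lack-of-memory statistic `ANₙ⁺`
for a uniform `[0,1]` observation `X`: for
`Ψ(x₁,x₂;t) = 1{x₁<t} + 1{x₂<t} − 1{x₁<t}1{x₂<t} − ½(1{x₁<2t−t²} + 1{x₂<2t−t²})`,
the projection is `ψ(z;t) = (1−t)·1{z<t} + t²/2 − ½·1{z<2t−t²}`, the variance
function is `∫₀¹ ψ(z;t)² dz = ¼ t(1−t)²(2−t) > 0` on `(0,1)`, and its maximum
over `[0,1]` is `1/16`, attained at `t = 1 − 1/√2`. -/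
theorem statement_16 :
    (∀ t : ℝ, t ∈ Ioo (0 : ℝ) 1 →
      (∀ z : ℝ, z ∈ Icc (0 : ℝ) 1 →
        ∫ x in (0 : ℝ)..1,
            ((if z < t then (1 : ℝ) else 0) + (if x < t then (1 : ℝ) else 0) -
              (if z < t then (1 : ℝ) else 0) * (if x < t then (1 : ℝ) else 0) -
              (1 / 2) * ((if z < 2 * t - t ^ 2 then (1 : ℝ) else 0) +
                (if x < 2 * t - t ^ 2 then (1 : ℝ) else 0))) =
          (1 - t) * (if z < t then (1 : ℝ) else 0) + t ^ 2 / 2 -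
            (1 / 2) * (if z < 2 * t - t ^ 2 then (1 : ℝ) else 0)) ∧
      (∫ z in (0 : ℝ)..1,
          ((1 - t) * (if z < t then (1 : ℝ) else 0) + t ^ 2 / 2 -
            (1 / 2) * (if z < 2 * t - t ^ 2 then (1 : ℝ) else 0)) ^ 2 =
        (1 / 4) * t * (1 - t) ^ 2 * (2 - t)) ∧
      0 < (1 / 4) * t * (1 - t) ^ 2 * (2 - t)) ∧
    (∀ t ∈ Icc (0 : ℝ) 1, (1 / 4) * t * (1 - t) ^ 2 * (2 - t) ≤ 1 / 16) ∧
    (1 - 1 / Real.sqrt 2) ∈ Icc (0 : ℝ) 1 ∧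
    (1 / 4) * (1 - 1 / Real.sqrt 2) * (1 - (1 - 1 / Real.sqrt 2)) ^ 2 *
      (2 - (1 - 1 / Real.sqrt 2)) = 1 / 16 := by
  refine ⟨?_, ?_, ?_, ?_⟩
  · intro t ht
    obtain ⟨ht0, ht1⟩ := ht
    have h0t : (0:ℝ) ≤ t := le_of_lt ht0
    have h1t : t ≤ 1 := le_of_lt ht1
    have h0s : (0:ℝ) ≤ 2 * t - t ^ 2 := by nlinarith
    have h1s : 2 * t - t ^ 2 ≤ 1 := by nlinarith [sq_nonneg (1 - t)]
    have hts : t ≤ 2 * t - t ^ 2 := by nlinarith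
    refine ⟨?_, ?_, ?_⟩
    · intro z hz
      set A : ℝ := (if z < t then (1:ℝ) else 0) with hA
      set B : ℝ := (if z < 2 * t - t ^ 2 then (1:ℝ) else 0) with hB
      have key : (fun x => (A + (if x < t then (1:ℝ) else 0) -
            A * (if x < t then (1:ℝ) else 0) -
            (1/2) * (B + (if x < 2 * t - t ^ 2 then (1:ℝ) else 0)))) =
          (fun x => (A - B/2) + (1 - A) * (if x < t then (1:ℝ) else 0) +
            (-(1/2)) * (if x < 2 * t - t ^ 2 then (1:ℝ) else 0)) := by
        funext x; ring
      rw [key, combo_integral t (2*t - t^2) h0t h1t h0s h1s]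
      ring
    · have key : (fun z => ((1 - t) * (if z < t then (1:ℝ) else 0) + t ^ 2 / 2 -
            (1 / 2) * (if z < 2 * t - t ^ 2 then (1:ℝ) else 0)) ^ 2) =
          (fun z => (t^4/4) + ((1-t)^2 + (1-t)*t^2 - (1-t)) * (if z < t then (1:ℝ) else 0)
            + (1/4 - t^2/2) * (if z < 2 * t - t ^ 2 then (1:ℝ) else 0)) := by
        funext z
        by_cases hz : z < t
        · have hz2 : z < 2 * t - t ^ 2 := lt_of_lt_of_le hz hts
          simp only [hz, hz2, if_pos]; ring
        · by_cases hz2 : z < 2 * t - t ^ 2 <;> simp only [hz, hz2, if_pos, if_neg, if_true,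
            if_false] <;> ring
      rw [key, combo_integral t (2*t - t^2) h0t h1t h0s h1s]
      ring
    · nlinarith [mul_pos ht0 (mul_pos (pow_pos (sub_pos.2 ht1) 2) (by linarith : (0:ℝ) < 2 - t))]
  · intro t ht
    nlinarith [sq_nonneg (2*(1-t)^2 - 1)]
  · constructor
    · have h1 : (1:ℝ) ≤ Real.sqrt 2 := by
        nlinarith [Real.sq_sqrt (by norm_num : (2:ℝ) ≥ 0), Real.sqrt_nonneg 2]
      have : 1 / Real.sqrt 2 ≤ 1 := by
        rw [div_le_one (by linarith)]; exact h1
      linarith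
    · have : (0:ℝ) < 1 / Real.sqrt 2 := by positivity
      linarith
  · have h2 : Real.sqrt 2 ^ 2 = 2 := Real.sq_sqrt (by norm_num)
    have hpos : (0:ℝ) < Real.sqrt 2 := Real.sqrt_pos.2 (by norm_num)
    field_simp
    nlinarith [h2, hpos]
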